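/- Let G be a topologically sorted DAG on n nodes. Then the saturation p_G of I_G at θ₀ equals the vanishing ideal of the image of the parametrization f_G: a polynomial f ∈ R belongs to p_G if and only if for every matrix A : Matrix (Fin n) (Fin n) ℂ with A i j = 0 unless E j i and every ω : Fin n → ℂ, f evaluates to 0 at the point of ℂ^{Sym2 (Fin n)} assigning to each unordered pair s(i,j) the (i,j) entry of (1 − A)⁻¹ * Matrix.diagonal (fun i => ω i ^ 2) * ((1 − A)⁻¹)ᵀ. -/

import Mathlib

open MvPolynomial Matrix

noncomputable section

/-- The parent set of a node `j` in the DAG with edge relation `E`. -/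
def parents {n : ℕ} (E : Fin n → Fin n → Prop) [DecidableRel E] (j : Fin n) : Finset (Fin n) :=
  Finset.univ.filter (fun i => E i j)

/-- The minor of `M` with rows `A` and columns `B`, each listed in increasing order. -/
def fminor {n : ℕ} {R : Type*} [CommRing R] (M : Matrix (Fin n) (Fin n) R)
    (A B : Finset (Fin n)) (h : B.card = A.card) : R :=
  Matrix.det (Matrix.of fun k l : Fin A.card =>
    M (A.orderEmbOfFin rfl k) (B.orderEmbOfFin h l))

/-- The generic symmetric matrix, with `(i,j)` entry the variable indexed by the unordered
pair `s(i,j)`. -/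
def genMat (n : ℕ) : Matrix (Fin n) (Fin n) (MvPolynomial (Sym2 (Fin n)) ℂ) :=
  fun i j => X (Sym2.mk i j)

/-- The ideal of imposed relations `I_G`, generated by the minors `det M_{{i}∪K,{j}∪K}` over all
pairs `i < j` with `¬ E i j`, where `K = pa(j)`. -/
def impIdeal {n : ℕ} (E : Fin n → Fin n → Prop) [DecidableRel E] :
    Ideal (MvPolynomial (Sym2 (Fin n)) ℂ) :=
  Ideal.span { f | ∃ i j : Fin n, ∃ _ : i < j, ∃ _ : ¬ E i j,
    ∃ h : (insert j (parents E j)).card = (insert i (parents E j)).card,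
      f = fminor (genMat n) (insert i (parents E j)) (insert j (parents E j)) h }

/-- The product `θ₀` of all principal minors of the generic symmetric matrix. -/
def theta0 (n : ℕ) : MvPolynomial (Sym2 (Fin n)) ℂ :=
  ∏ A : Finset (Fin n), fminor (genMat n) A A rfl

/-- The saturation `{f | ∃ m, g ^ m * f ∈ I}` of an ideal `I` at an element `g`. -/
def satIdeal {R : Type*} [CommRing R] (I : Ideal R) (g : R) : Ideal R where
  carrier := {f | ∃ m : ℕ, g ^ m * f ∈ I}
  zero_mem' := ⟨0, by simp⟩
  add_mem' := by
    rintro a b ⟨ma, ha⟩ ⟨mb, hb⟩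
    refine ⟨ma + mb, ?_⟩
    have h : g ^ (ma + mb) * (a + b) = g ^ mb * (g ^ ma * a) + g ^ ma * (g ^ mb * b) := by
      ring
    rw [h]
    exact I.add_mem (I.mul_mem_left _ ha) (I.mul_mem_left _ hb)
  smul_mem' := by
    rintro c a ⟨m, hm⟩
    refine ⟨m, ?_⟩
    have h : g ^ m * (c • a) = c * (g ^ m * a) := by
      simp only [smul_eq_mul]; ring
    rw [h]
    exact I.mul_mem_left _ hm


/-- The saturation `p_G` of `I_G` at `θ₀`. -/
def satPG {n : ℕ} (E : Fin n → Fin n → Prop) [DecidableRel E] :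
    Ideal (MvPolynomial (Sym2 (Fin n)) ℂ) :=
  satIdeal (impIdeal E) (theta0 n)

/-!
Let `paramHom : R → ℂ[A, w]` send the generic matrix to the generic covariance matrix
`(1 - A)⁻¹ diag(w) (1 - A)⁻ᵀ` of a linear structural equation model on `G`. Every variance is a
square, so the vanishing ideal of the image of `f_G` is `ker paramHom`.

`p_G ⊆ ker paramHom`: on the rows `{i} ∪ pa(j)` (all before `j`), column `j` of a covariance
matrix is the combination of the columns `pa(j)` with coefficients `A_{j,·}`, so the generators of
`I_G` are killed; `θ₀` is not (at `A = 0`, `w = 1` all principal minors are `1`), and `ℂ[A, w]`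
is a domain.

`ker paramHom ⊆ p_G`: over `Q = (R ⧸ I_G)[θ₀⁻¹]` the parent minors are units, so each node can be
regressed on its parents. Through Schur complements, the vanishing of the bordered minors says
that these regressions explain every covariance with an earlier node, which makes
`(1 - Â) M (1 - Â)ᵀ` diagonal. So the image of the generic matrix in `Q` is a covariance matrix,
`R → Q` factors through `paramHom`, and its kernel is `p_G`.
-/

namespace Matrix

variable {α ι κ S T : Type*}

def IsStrictLowerTriangular [LE ι] [Zero S] (A : Matrix ι ι S) : Prop :=
  ∀ ⦃i j⦄, i ≤ j → A i j = 0

abbrev principalSubmatrix (M : Matrix α α S) (K : Finset α) : Matrix K K S :=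
  M.submatrix (↑) (↑)

variable [DecidableEq ι] [CommRing S] [CommRing T]

theorem IsStrictLowerTriangular.isLowerTriangular_one_sub [LinearOrder ι] {A : Matrix ι ι S}
    (hA : A.IsStrictLowerTriangular) : (1 - A).IsLowerTriangular := fun i j hij => by
  have hij : i < j := OrderDual.toDual_lt_toDual.mp hij
  rw [sub_apply, one_apply_ne hij.ne, hA hij.le, sub_zero]

variable [Fintype ι]

theorem map_nonsing_inv {M : Matrix ι ι S} (hM : IsUnit M.det) (f : S →+* T) :
    M⁻¹.map f = (M.map f)⁻¹ := by
  symm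
  apply inv_eq_right_inv
  rw [← RingHom.mapMatrix_apply, ← RingHom.mapMatrix_apply, ← map_mul, mul_nonsing_inv _ hM,
    map_one]

/-- The covariance matrix of the linear structural equation model `x = A x + ε` with independent
noise of variances `w`. -/
def semCov (A : Matrix ι ι S) (w : ι → S) : Matrix ι ι S :=
  (1 - A)⁻¹ * diagonal w * ((1 - A)⁻¹)ᵀ

theorem semCov_transpose (A : Matrix ι ι S) (w : ι → S) : (semCov A w)ᵀ = semCov A w := by
  rw [semCov, transpose_mul, transpose_mul, transpose_transpose, diagonal_transpose,
    Matrix.mul_assoc]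

namespace IsStrictLowerTriangular

variable [LinearOrder ι] {A M : Matrix ι ι S}

theorem det_one_sub (hA : A.IsStrictLowerTriangular) : (1 - A).det = 1 := by
  rw [det_of_isLowerTriangular _ hA.isLowerTriangular_one_sub]
  exact Finset.prod_eq_one fun i _ => by rw [sub_apply, one_apply_eq, hA le_rfl, sub_zero]

theorem isUnit_det_one_sub (hA : A.IsStrictLowerTriangular) : IsUnit (1 - A).det := by
  rw [hA.det_one_sub]
  exact isUnit_one

theorem isLowerTriangular_inv_one_sub (hA : A.IsStrictLowerTriangular) :
    (1 - A)⁻¹.IsLowerTriangular :=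
  have := (1 - A).invertibleOfIsUnitDet hA.isUnit_det_one_sub
  blockTriangular_inv_of_blockTriangular hA.isLowerTriangular_one_sub

theorem map_semCov (hA : A.IsStrictLowerTriangular) (f : S →+* T) (w : ι → S) :
    (semCov A w).map f = semCov (A.map f) (f ∘ w) := by
  have h : (1 - A).map f = 1 - A.map f := by
    rw [← RingHom.mapMatrix_apply, map_sub, map_one]
    rfl
  rw [semCov, semCov, Matrix.map_mul, Matrix.map_mul, transpose_map,
    map_nonsing_inv hA.isUnit_det_one_sub, h, diagonal_map (map_zero f)]
  rfl

theorem semCov_apply_of_lt (hA : A.IsStrictLowerTriangular) (w : ι → S) {r j : ι}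
    (hrj : r < j) : semCov A w r j = ∑ k, A j k * semCov A w r k := by
  have hcol : semCov A w * (1 - A)ᵀ = (1 - A)⁻¹ * diagonal w := by
    rw [semCov, Matrix.mul_assoc, ← transpose_mul, mul_nonsing_inv _ hA.isUnit_det_one_sub,
      transpose_one, Matrix.mul_one]
  have := congr_fun₂ hcol r j
  rw [mul_diagonal, hA.isLowerTriangular_inv_one_sub (OrderDual.toDual_lt_toDual.mpr hrj),
    zero_mul, mul_apply] at this
  simp only [transpose_apply, sub_apply, one_apply, mul_sub, mul_ite, mul_one, mul_zero,
    Finset.sum_sub_distrib, Finset.sum_ite_eq, Finset.mem_univ, if_true, sub_eq_zero] at this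
  rw [this]
  exact Finset.sum_congr rfl fun k _ => mul_comm _ _

/-- The relations make `(1 - A) M` upper triangular, so `(1 - A) M (1 - A)ᵀ` is upper triangular
and symmetric, hence diagonal. -/
theorem eq_semCov (hA : A.IsStrictLowerTriangular) (hM : Mᵀ = M)
    (hrel : ∀ r j, r < j → M r j = ∑ k, A j k * M r k) :
    M = semCov A (diag ((1 - A) * M * (1 - A)ᵀ)) := by
  set N := (1 - A) * M * (1 - A)ᵀ with hN
  have hNsymm : Nᵀ = N := by
    rw [hN, transpose_mul, transpose_mul, transpose_transpose, hM, Matrix.mul_assoc]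
  have hsymm : ∀ a b, M a b = M b a := fun a b => congr_fun₂ hM b a
  have hupper : ((1 - A) * M).IsUpperTriangular := fun j c (hcj : c < j) => by
    rw [Matrix.sub_mul, Matrix.one_mul, sub_apply, mul_apply, hsymm, hrel c j hcj, sub_eq_zero]
    exact Finset.sum_congr rfl fun k _ => by rw [hsymm]
  have hNupper : N.IsUpperTriangular :=
    hupper.mul fun i j (hij : j < i) => hA.isLowerTriangular_one_sub hij
  have hNdiag : N.IsDiag := fun i j hij => by
    rcases hij.lt_or_gt with h | h
    · rw [← hNsymm, transpose_apply]
      exact hNupper h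
    · exact hNupper h
  have hunit := hA.isUnit_det_one_sub
  rw [semCov, hNdiag.diagonal_diag, hN, ← Matrix.mul_assoc, ← Matrix.mul_assoc,
    nonsing_inv_mul _ hunit, Matrix.one_mul, Matrix.mul_assoc, ← transpose_mul,
    nonsing_inv_mul _ hunit, transpose_one, Matrix.mul_one]

end IsStrictLowerTriangular

variable [Fintype κ] [DecidableEq κ]

theorem associated_det_submatrix_equiv (e₁ e₂ : ι ≃ κ) (N : Matrix κ κ S) :
    Associated (N.submatrix e₁ e₂).det N.det := by
  have he : e₂ = e₁.trans (e₁.symm.trans e₂) := by ext; simp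
  rw [he]
  change Associated ((N.submatrix id (e₁.symm.trans e₂)).submatrix e₁ e₁).det N.det
  rw [det_submatrix_equiv_self, det_permute']
  exact associated_unit_mul_left _ _ (Units.map (Int.castRingHom S).toMonoidHom _).isUnit

theorem associated_det_submatrix_of_range_eq (N : Matrix α α S) {f g : ι → α} {f' g' : κ → α}
    (hf : f.Injective) (hg : g.Injective) (hf' : f'.Injective) (hg' : g'.Injective)
    (hfr : Set.range f = Set.range f') (hgr : Set.range g = Set.range g') :
    Associated (N.submatrix f g).det (N.submatrix f' g').det := by
  let σ : ι ≃ κ :=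
    (Equiv.ofInjective f hf).trans ((Equiv.setCongr hfr).trans (Equiv.ofInjective f' hf').symm)
  let τ : ι ≃ κ :=
    (Equiv.ofInjective g hg).trans ((Equiv.setCongr hgr).trans (Equiv.ofInjective g' hg').symm)
  have hσ : ∀ i, f' (σ i) = f i := fun i => Equiv.apply_ofInjective_symm hf' _
  have hτ : ∀ i, g' (τ i) = g i := fun i => Equiv.apply_ofInjective_symm hg' _
  have : N.submatrix f g = (N.submatrix f' g').submatrix σ τ := by
    ext i j
    simp only [submatrix_apply, hσ, hτ]
  rw [this]
  exact associated_det_submatrix_equiv σ τ _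

end Matrix

open Matrix

section Minors

variable {α κ S T : Type*} [CommRing S] [CommRing T]

theorem associated_fminor [Fintype κ] [DecidableEq κ] {n : ℕ} (M : Matrix (Fin n) (Fin n) S)
    {A B : Finset (Fin n)} (h : B.card = A.card) {f g : κ → Fin n} (hf : f.Injective)
    (hg : g.Injective) (hfA : Set.range f = A) (hgB : Set.range g = B) :
    Associated (fminor M A B h) (M.submatrix f g).det :=
  M.associated_det_submatrix_of_range_eq (A.orderEmbOfFin rfl).injective
    (B.orderEmbOfFin h).injective hf hg (by rw [Finset.range_orderEmbOfFin, hfA])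
    (by rw [Finset.range_orderEmbOfFin, hgB])

theorem RingHom.map_fminor {n : ℕ} (f : S →+* T) (M : Matrix (Fin n) (Fin n) S)
    (A B : Finset (Fin n)) (h : B.card = A.card) :
    f (fminor M A B h) = fminor (M.map f) A B h := by
  rw [fminor, fminor, RingHom.map_det]
  rfl

theorem fminor_one {n : ℕ} (A : Finset (Fin n)) :
    fminor (1 : Matrix (Fin n) (Fin n) S) A A rfl = 1 :=
  (congr_arg det (submatrix_one _ (A.orderEmbOfFin rfl).injective)).trans det_one

def border (K : Finset α) (x : α) : K ⊕ Unit → α :=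
  Sum.elim (↑) fun _ => x

theorem border_injective {K : Finset α} {x : α} (hx : x ∉ K) : (border K x).Injective := by
  rintro (a | a) (b | b) hab
  · exact congrArg Sum.inl (Subtype.ext hab)
  · have h : (a : α) = x := hab
    exact absurd (h ▸ a.2) hx
  · have h : x = b := hab
    exact absurd (h ▸ b.2) hx
  · rfl

variable [DecidableEq α]

theorem range_border (K : Finset α) (x : α) : Set.range (border K x) = ↑(insert x K) := by
  rw [border, Set.Sum.elim_range, Set.range_const, Subtype.range_coe_subtype, Finset.coe_insert,
    Set.union_singleton]
  rfl

theorem det_submatrix_border (M : Matrix α α S) (K : Finset α) (r j : α)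
    (hK : IsUnit (M.principalSubmatrix K).det) :
    (M.submatrix (border K r) (border K j)).det = (M.principalSubmatrix K).det *
      (M r j - (fun l : K => M r l) ⬝ᵥ ((M.principalSubmatrix K)⁻¹ *ᵥ fun l : K => M l j)) := by
  have := (M.principalSubmatrix K).invertibleOfIsUnitDet hK
  have hblock : M.submatrix (border K r) (border K j) =
      fromBlocks (M.principalSubmatrix K) (of fun k (_ : Unit) => M k j)
        (of fun (_ : Unit) l => M r l) (of fun _ _ => M r j) := by
    ext (a | a) (b | b) <;> rfl
  rw [hblock, det_fromBlocks₁₁, det_unique (n := Unit), invOf_eq_nonsing_inv, dotProduct_mulVec]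
  rfl

def regCoeff (M : Matrix α α S) (K : Finset α) (j : α) : K → S :=
  (M.principalSubmatrix K)⁻¹ *ᵥ fun l => M l j

theorem dotProduct_regCoeff_of_mem {M : Matrix α α S} {K : Finset α}
    (hK : IsUnit (M.principalSubmatrix K).det) (j : α) {r : α} (hr : r ∈ K) :
    (fun l : K => M r l) ⬝ᵥ regCoeff M K j = M r j := by
  have : M.principalSubmatrix K *ᵥ regCoeff M K j = fun l : K => M l j := by
    rw [regCoeff, mulVec_mulVec, mul_nonsing_inv _ hK, one_mulVec]
  exact congr_fun this ⟨r, hr⟩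

theorem dotProduct_regCoeff_of_fminor_eq_zero {n : ℕ} {M : Matrix (Fin n) (Fin n) S}
    {K : Finset (Fin n)} (hK : IsUnit (M.principalSubmatrix K).det) {r j : Fin n} (hr : r ∉ K)
    (hj : j ∉ K) (h : (insert j K).card = (insert r K).card)
    (hzero : fminor M (insert r K) (insert j K) h = 0) :
    (fun l : K => M r l) ⬝ᵥ regCoeff M K j = M r j := by
  have hdet := (associated_fminor M h (border_injective hr) (border_injective hj)
    (range_border K r) (range_border K j)).eq_zero_iff.mp hzero
  rw [det_submatrix_border M K r j hK, hK.mul_right_eq_zero, sub_eq_zero] at hdet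
  exact hdet.symm

end Minors

section Regression

variable {n : ℕ} {S : Type*} [CommRing S] {E : Fin n → Fin n → Prop}

theorem isStrictLowerTriangular_of_support (hE : ∀ i j, E i j → i < j)
    {A : Matrix (Fin n) (Fin n) S} (hA : ∀ i j, ¬ E j i → A i j = 0) :
    A.IsStrictLowerTriangular := fun i j hij => hA i j fun h => (hE j i h).not_ge hij

variable [DecidableRel E]

theorem mem_parents {k j : Fin n} : k ∈ parents E j ↔ E k j := by
  simp [parents]

theorem sum_mul_eq_sum_parents {j : Fin n} {a : Fin n → S} (ha : ∀ k, ¬ E k j → a k = 0)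
    (F : Fin n → S) : ∑ k, a k * F k = ∑ l : parents E j, a l * F l := by
  rw [Finset.sum_coe_sort (parents E j) fun k => a k * F k]
  refine (Finset.sum_subset (Finset.subset_univ _) fun k _ hk => ?_).symm
  rw [ha k fun h => hk (mem_parents.mpr h), zero_mul]

variable (E) in
def regMat (M : Matrix (Fin n) (Fin n) S) : Matrix (Fin n) (Fin n) S := fun j k =>
  if h : k ∈ parents E j then regCoeff M (parents E j) j ⟨k, h⟩ else 0

variable {M : Matrix (Fin n) (Fin n) S}

theorem regMat_apply_of_not_edge (M : Matrix (Fin n) (Fin n) S) {j k : Fin n} (h : ¬ E k j) :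
    regMat E M j k = 0 :=
  dif_neg fun hk => h (mem_parents.mp hk)

theorem sum_regMat_mul (j : Fin n) (F : Fin n → S) :
    ∑ k, regMat E M j k * F k = (fun l : parents E j => F l) ⬝ᵥ regCoeff M (parents E j) j := by
  rw [sum_mul_eq_sum_parents (fun k => regMat_apply_of_not_edge M) F, dotProduct]
  exact Finset.sum_congr rfl fun l _ => by rw [regMat, dif_pos l.2, mul_comm]

theorem apply_eq_sum_regMat_mul (hE : ∀ i j, E i j → i < j)
    (hG : ∀ j, IsUnit (fminor M (parents E j) (parents E j) rfl))
    (hgen : ∀ i j : Fin n, i < j → ¬ E i j →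
      ∀ h : (insert j (parents E j)).card = (insert i (parents E j)).card,
        fminor M (insert i (parents E j)) (insert j (parents E j)) h = 0)
    {r j : Fin n} (hrj : r < j) :
    M r j = ∑ k, regMat E M j k * M r k := by
  have hK := (associated_fminor M rfl Subtype.val_injective Subtype.val_injective
    Subtype.range_coe Subtype.range_coe).isUnit (hG j)
  rw [sum_regMat_mul]
  by_cases hr : r ∈ parents E j
  · exact (dotProduct_regCoeff_of_mem hK j hr).symm
  · have hj : j ∉ parents E j := fun h => (hE j j (mem_parents.mp h)).false
    have h : (insert j (parents E j)).card = (insert r (parents E j)).card := by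
      rw [Finset.card_insert_of_notMem hj, Finset.card_insert_of_notMem hr]
    exact (dotProduct_regCoeff_of_fminor_eq_zero hK hr hj h
      (hgen r j hrj (fun h => hr (mem_parents.mpr h)) h)).symm

theorem exists_eq_semCov (hE : ∀ i j, E i j → i < j) (hM : Mᵀ = M)
    (hG : ∀ j, IsUnit (fminor M (parents E j) (parents E j) rfl))
    (hgen : ∀ i j : Fin n, i < j → ¬ E i j →
      ∀ h : (insert j (parents E j)).card = (insert i (parents E j)).card,
        fminor M (insert i (parents E j)) (insert j (parents E j)) h = 0) :
    ∃ (A : Matrix (Fin n) (Fin n) S) (w : Fin n → S),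
      (∀ i j, ¬ E j i → A i j = 0) ∧ M = semCov A w :=
  ⟨regMat E M, _, fun _ _ => regMat_apply_of_not_edge M,
    (isStrictLowerTriangular_of_support hE fun _ _ => regMat_apply_of_not_edge M).eq_semCov hM
      fun _ _ => apply_eq_sum_regMat_mul hE hG hgen⟩

/-- The vector `(-A_{j,·}, 1)` lies in the kernel: on every row before `j`, column `j` of
`semCov A w` is the `A`-combination of the columns `pa(j)`. -/
theorem fminor_semCov_eq_zero [IsDomain S] (hE : ∀ i j, E i j → i < j)
    {A : Matrix (Fin n) (Fin n) S} (hA : ∀ i j, ¬ E j i → A i j = 0) (w : Fin n → S)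
    {i j : Fin n} (hij : i < j) (hnE : ¬ E i j)
    (h : (insert j (parents E j)).card = (insert i (parents E j)).card) :
    fminor (semCov A w) (insert i (parents E j)) (insert j (parents E j)) h = 0 := by
  set K := parents E j
  have hj : j ∉ K := fun h => (hE j j (mem_parents.mp h)).false
  have hi : i ∉ K := fun h => hnE (mem_parents.mp h)
  refine (associated_fminor _ h (border_injective hi) (border_injective hj) (range_border K i)
    (range_border K j)).eq_zero_iff.mpr (exists_mulVec_eq_zero_iff.mp ?_)
  refine ⟨Sum.elim (fun k => -A j k) fun _ => 1, fun h0 => one_ne_zero (congr_fun h0 (.inr ())),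
    funext fun y => ?_⟩
  have hyj : border K i y < j := by
    rcases y with k | _
    · exact hE k j (mem_parents.mp k.2)
    · exact hij
  have hrel := (isStrictLowerTriangular_of_support hE hA).semCov_apply_of_lt w hyj
  rw [sum_mul_eq_sum_parents (fun k hk => hA j k hk)] at hrel
  simp only [mulVec, dotProduct, Fintype.sum_sum_type, submatrix_apply, Sum.elim_inl,
    Sum.elim_inr, Finset.univ_unique, Finset.sum_singleton, mul_one, mul_neg,
    Finset.sum_neg_distrib, Pi.zero_apply]
  change -∑ l : K, semCov A w (border K i y) l * A j l + semCov A w (border K i y) j = 0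
  rw [hrel, neg_add_eq_zero]
  exact Finset.sum_congr rfl fun l _ => mul_comm _ _

end Regression

section Saturation

variable {R T : Type*} [CommRing R] [CommRing T] {I : Ideal R} {g : R}

theorem satIdeal_le_ker [IsDomain T] (φ : R →+* T) (hI : I ≤ RingHom.ker φ) (hg : φ g ≠ 0) :
    satIdeal I g ≤ RingHom.ker φ := by
  rintro f ⟨m, hm⟩
  have := hI hm
  rw [RingHom.mem_ker, map_mul, map_pow] at this
  exact (mul_eq_zero.mp this).resolve_left (pow_ne_zero m hg)

theorem mem_satIdeal_of_algebraMap_eq_zero {f : R}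
    (hf : algebraMap (R ⧸ I) (Localization.Away (Ideal.Quotient.mk I g))
      (Ideal.Quotient.mk I f) = 0) :
    f ∈ satIdeal I g := by
  obtain ⟨⟨_, m, rfl⟩, hm⟩ :=
    (IsLocalization.map_eq_zero_iff (Submonoid.powers (Ideal.Quotient.mk I g)) _ _).mp hf
  have hm : Ideal.Quotient.mk I (g ^ m * f) = 0 := by rwa [map_mul, map_pow]
  exact ⟨m, Ideal.Quotient.eq_zero_iff_mem.mp hm⟩

end Saturation

section Parametrization

variable {n : ℕ} (E : Fin n → Fin n → Prop) [DecidableRel E] {T : Type*} [CommRing T]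

/-- Coordinates of the parameter space of `f_G`: the entries of `A`, then the noise variances. -/
abbrev ParamIdx (n : ℕ) := (Fin n × Fin n) ⊕ Fin n

def edgeMat (v : ParamIdx n → T) : Matrix (Fin n) (Fin n) T :=
  fun i j => if E j i then v (.inl (i, j)) else 0

theorem edgeMat_apply_of_not_edge (v : ParamIdx n → T) {i j : Fin n} (h : ¬ E j i) :
    edgeMat E v i j = 0 :=
  if_neg h

theorem edgeMat_sumElim {A : Matrix (Fin n) (Fin n) T} (hA : ∀ i j, ¬ E j i → A i j = 0)
    (w : Fin n → T) : edgeMat E (Sum.elim (fun p => A p.1 p.2) w) = A := by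
  ext i j
  by_cases h : E j i
  · exact if_pos h
  · rw [edgeMat_apply_of_not_edge E _ h, hA i j h]

def covPoint (A : Matrix (Fin n) (Fin n) T) (w : Fin n → T) : Sym2 (Fin n) → T :=
  Sym2.lift ⟨fun i j => semCov A w i j, fun i j => congr_fun₂ (semCov_transpose A w) j i⟩

theorem covPoint_mk (A : Matrix (Fin n) (Fin n) T) (w : Fin n → T) (i j : Fin n) :
    covPoint A w s(i, j) = semCov A w i j :=
  Sym2.lift_mk _ i j

theorem genMat_map_eval₂Hom_covPoint (φ : ℂ →+* T) (A : Matrix (Fin n) (Fin n) T)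
    (w : Fin n → T) : (genMat n).map (eval₂Hom φ (covPoint A w)) = semCov A w := by
  ext i j
  rw [map_apply, genMat, eval₂Hom_X', covPoint_mk]

/-- The ring map dual to `f_G`. -/
def paramHom : MvPolynomial (Sym2 (Fin n)) ℂ →+* MvPolynomial (ParamIdx n) ℂ :=
  eval₂Hom C (covPoint (edgeMat E X) fun j => X (.inr j))

variable {E}

theorem eval₂Hom_comp_paramHom (hE : ∀ i j, E i j → i < j) (φ : ℂ →+* T)
    (v : ParamIdx n → T) :
    (eval₂Hom φ v).comp (paramHom E) = eval₂Hom φ (covPoint (edgeMat E v) (v ∘ .inr)) := by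
  have hA := isStrictLowerTriangular_of_support hE fun _ _ =>
    edgeMat_apply_of_not_edge E (X : ParamIdx n → MvPolynomial (ParamIdx n) ℂ)
  apply MvPolynomial.ringHom_ext
  · intro a
    simp [paramHom]
  · rintro ⟨i, j⟩
    change eval₂Hom φ v (eval₂Hom C _ (X s(i, j))) = _
    rw [eval₂Hom_X', eval₂Hom_X', covPoint_mk, covPoint_mk]
    change (semCov _ _).map (eval₂Hom φ v) i j = _
    have hedge : (edgeMat E X).map (eval₂Hom φ v) = edgeMat E v := by
      ext a b
      simp only [map_apply, edgeMat]
      split_ifs <;> simp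
    have hw : (eval₂Hom φ v ∘ fun k => X (.inr k)) = v ∘ .inr :=
      funext fun k => eval₂Hom_X' φ v _
    rw [hA.map_semCov, hedge, hw]

theorem impIdeal_le_ker_paramHom (hE : ∀ i j, E i j → i < j) :
    impIdeal E ≤ RingHom.ker (paramHom E) := by
  rw [impIdeal, Ideal.span_le]
  rintro _ ⟨i, j, hij, hnE, h, rfl⟩
  rw [SetLike.mem_coe, RingHom.mem_ker, paramHom, RingHom.map_fminor,
    genMat_map_eval₂Hom_covPoint]
  exact fminor_semCov_eq_zero hE (fun _ _ => edgeMat_apply_of_not_edge E X) _ hij hnE h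

theorem paramHom_theta0_ne_zero (hE : ∀ i j, E i j → i < j) : paramHom E (theta0 n) ≠ 0 := by
  intro h0
  have h1 := congr_arg
    (eval₂Hom (RingHom.id ℂ) (Sum.elim (fun p => (0 : Matrix (Fin n) (Fin n) ℂ) p.1 p.2)
      fun _ => 1)) h0
  rw [← RingHom.comp_apply, eval₂Hom_comp_paramHom hE, edgeMat_sumElim E (A := 0) fun _ _ _ => rfl,
    Sum.elim_comp_inr, map_zero, theta0, map_prod] at h1
  simp only [RingHom.map_fminor, genMat_map_eval₂Hom_covPoint, semCov, sub_zero, inv_one,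
    diagonal_one, Matrix.mul_one, transpose_one, fminor_one, Finset.prod_const_one] at h1
  exact one_ne_zero h1

theorem eval_covPoint_eq_zero_of_mem_satPG (hE : ∀ i j, E i j → i < j)
    {f : MvPolynomial (Sym2 (Fin n)) ℂ} (hf : f ∈ satPG E) {A : Matrix (Fin n) (Fin n) ℂ}
    (hA : ∀ i j, ¬ E j i → A i j = 0) (w : Fin n → ℂ) : eval (covPoint A w) f = 0 := by
  have hf : paramHom E f = 0 :=
    satIdeal_le_ker _ (impIdeal_le_ker_paramHom hE) (paramHom_theta0_ne_zero hE) hf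
  have := congr_arg (eval₂Hom (RingHom.id ℂ) (Sum.elim (fun p => A p.1 p.2) w)) hf
  rwa [← RingHom.comp_apply, eval₂Hom_comp_paramHom hE, edgeMat_sumElim E hA, Sum.elim_comp_inr,
    map_zero] at this

theorem paramHom_eq_zero_of_forall_eval_covPoint (hE : ∀ i j, E i j → i < j)
    {f : MvPolynomial (Sym2 (Fin n)) ℂ}
    (hf : ∀ (A : Matrix (Fin n) (Fin n) ℂ) (ω : Fin n → ℂ), (∀ i j, ¬ E j i → A i j = 0) →
      eval (covPoint A fun i => ω i ^ 2) f = 0) :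
    paramHom E f = 0 := by
  refine MvPolynomial.funext fun v => ?_
  choose ω hω using fun j => IsAlgClosed.exists_pow_nat_eq (v (.inr j)) two_pos
  rw [map_zero, ← hf (edgeMat E v) ω fun _ _ => edgeMat_apply_of_not_edge E v]
  change eval₂Hom (RingHom.id ℂ) v (paramHom E f) = _
  rw [← RingHom.comp_apply, eval₂Hom_comp_paramHom hE]
  congr
  exact funext fun j => (hω j).symm

theorem mem_satPG_of_paramHom_eq_zero (hE : ∀ i j, E i j → i < j)
    {f : MvPolynomial (Sym2 (Fin n)) ℂ} (hf : paramHom E f = 0) : f ∈ satPG E := by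
  set Q := Localization.Away (Ideal.Quotient.mk (impIdeal E) (theta0 n))
  set ι : MvPolynomial (Sym2 (Fin n)) ℂ →+* Q :=
    (algebraMap _ Q).comp (Ideal.Quotient.mk (impIdeal E))
  have hI : ∀ g ∈ impIdeal E, ι g = 0 := fun g hg => by
    rw [RingHom.comp_apply, Ideal.Quotient.eq_zero_iff_mem.mpr hg, map_zero]
  have hθ : IsUnit (ι (theta0 n)) :=
    IsLocalization.Away.algebraMap_isUnit (S := Q) (Ideal.Quotient.mk (impIdeal E) (theta0 n))
  have hsymm : ((genMat n).map ι)ᵀ = (genMat n).map ι := by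
    ext i j
    simp only [transpose_apply, map_apply, genMat, Sym2.eq_swap]
  obtain ⟨A, w, hA, hM⟩ := exists_eq_semCov hE hsymm
    (fun j => by
      rw [← RingHom.map_fminor]
      exact isUnit_of_dvd_unit (map_dvd ι (Finset.dvd_prod_of_mem
        (fun K : Finset (Fin n) => fminor (genMat n) K K rfl) (Finset.mem_univ _))) hθ)
    (fun i j hij hnE h => by
      rw [← RingHom.map_fminor]
      exact hI _ (Ideal.subset_span ⟨i, j, hij, hnE, h, rfl⟩))
  have hι : ι = (eval₂Hom (ι.comp C) (Sum.elim (fun p => A p.1 p.2) w)).comp (paramHom E) := by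
    rw [eval₂Hom_comp_paramHom hE, edgeMat_sumElim E hA, Sum.elim_comp_inr]
    refine MvPolynomial.ringHom_ext (fun a => (eval₂Hom_C (ι.comp C) _ a).symm) fun s => ?_
    induction s using Sym2.ind with
    | _ i j => rw [eval₂Hom_X', covPoint_mk, ← hM]; rfl
  apply mem_satIdeal_of_algebraMap_eq_zero
  change ι f = 0
  rw [hι, RingHom.comp_apply, hf, map_zero]

end Parametrization

theorem mem_satPG_iff_vanishing_general {n : ℕ}
    (E : Fin n → Fin n → Prop) [DecidableRel E] (hE : ∀ i j, E i j → i < j)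
    (f : MvPolynomial (Sym2 (Fin n)) ℂ) :
    f ∈ satPG E ↔
      ∀ (A : Matrix (Fin n) (Fin n) ℂ) (ω : Fin n → ℂ) (x : Sym2 (Fin n) → ℂ),
        (∀ i j, ¬ E j i → A i j = 0) →
        (∀ i j, x (Sym2.mk i j) =
          (((1 - A)⁻¹ * Matrix.diagonal (fun i => ω i ^ 2) * ((1 - A)⁻¹)ᵀ :
            Matrix (Fin n) (Fin n) ℂ)) i j) →
        MvPolynomial.eval x f = 0 := by
  refine ⟨fun hf A ω x hA hx => ?_, fun hv => ?_⟩
  · obtain rfl : x = covPoint A fun i => ω i ^ 2 :=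
      funext fun s => s.ind fun i j => (hx i j).trans (covPoint_mk A _ i j).symm
    exact eval_covPoint_eq_zero_of_mem_satPG hE hf hA _
  · exact mem_satPG_of_paramHom_eq_zero hE <| paramHom_eq_zero_of_forall_eval_covPoint hE
      fun A ω hA => hv A ω _ hA (covPoint_mk A _)

/-- Theorem 1(a),(b) and Proposition 2 of the paper: `p_G` is the vanishing ideal of the image
of the parametrization `f_G : (A, ω) ↦ (1 − A)⁻¹ Ω² (1 − A)⁻ᵀ` with `A` supported on the
edges of `G`. -/
theorem mem_satPG_iff_vanishing {n : ℕ} (hn : 1 ≤ n)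
    (E : Fin n → Fin n → Prop) [DecidableRel E] (hE : ∀ i j, E i j → i < j)
    (f : MvPolynomial (Sym2 (Fin n)) ℂ) :
    f ∈ satPG E ↔
      ∀ (A : Matrix (Fin n) (Fin n) ℂ) (ω : Fin n → ℂ) (x : Sym2 (Fin n) → ℂ),
        (∀ i j, ¬ E j i → A i j = 0) →
        (∀ i j, x (Sym2.mk i j) =
          (((1 - A)⁻¹ * Matrix.diagonal (fun i => ω i ^ 2) * ((1 - A)⁻¹)ᵀ :
            Matrix (Fin n) (Fin n) ℂ)) i j) →
        MvPolynomial.eval x f = 0 :=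
  mem_satPG_iff_vanishing_general E hE f
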